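/- arXiv:0910.5374 — 13 statements merged into one kernel-verified Lean document; each statement's English description precedes it below -/
import Mathlib

section
/- If R is a right quasi-duo ring, then the quotient R/J(R) is a reduced ring (has no nonzero nilpotent elements). -/
/-!
Maximal right ideals `M` of a right quasi-duo ring are two-sided, so if `a ∉ M` and
`1 ≡ a r (mod M)`, then also `1 ≡ aⁿ rⁿ (mod M)`; hence `aⁿ ∉ M`. The Jacobson radical, which
Mathlib defines through maximal left ideals, is also the intersection of the maximal right
ideals (by Jacobson's lemma: `1 + x y` is a unit iff `1 + y x` is). So an element with a power
in `J(R)` lies in every maximal right ideal, hence in `J(R)`.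
-/

/-- A ring is right quasi-duo if every maximal right ideal (a coatom in the
lattice of right ideals, i.e. submodules of `R` over `Rᵐᵒᵖ`) is two-sided. -/
def RightQuasiDuo (R : Type*) [Ring R] : Prop :=
  ∀ I : Submodule Rᵐᵒᵖ R, IsCoatom I → ∀ r x : R, x ∈ I → r * x ∈ I

/-- A ring is left quasi-duo if every maximal left ideal is two-sided. -/
def LeftQuasiDuo (R : Type*) [Ring R] : Prop :=
  ∀ I : Submodule R R, IsCoatom I → ∀ r x : R, x ∈ I → x * r ∈ I

open MulOpposite

section

variable {R : Type*} [Ring R]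

instance Module.Finite.mulOpposite_self : Module.Finite Rᵐᵒᵖ R :=
  Module.Finite.equiv (opLinearEquiv Rᵐᵒᵖ).symm

-- Jacobson's lemma, read off from `spectrum.unit_mem_mul_comm` over `ℤ` at `1`.
theorem isUnit_one_add_mul_comm {a b : R} : IsUnit (1 + a * b) ↔ IsUnit (1 + b * a) := by
  simpa [spectrum.mem_iff] using
    (spectrum.unit_mem_mul_comm (R := ℤ) (a := -a) (b := b) (r := 1)).not

section RightIdeal

variable {M : Submodule Rᵐᵒᵖ R}

theorem one_notMem_of_isCoatom (hM : IsCoatom M) : (1 : R) ∉ M := fun h ↦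
  hM.ne_top <| eq_top_iff.2 fun x _ ↦ by simpa using M.smul_mem (op x) h

theorem exists_add_mul_eq_one_of_notMem (hM : IsCoatom M) {x : R} (hx : x ∉ M) :
    ∃ m ∈ M, ∃ r : R, m + x * r = 1 := by
  have hsup : M ⊔ Rᵐᵒᵖ ∙ x = ⊤ := codisjoint_iff.1 <|
    hM.not_le_iff_codisjoint.1 (by rwa [Submodule.span_singleton_le_iff_mem])
  obtain ⟨m, hm, _, hz, hmz⟩ := Submodule.mem_sup.1 (hsup ▸ Submodule.mem_top : (1 : R) ∈ _)
  obtain ⟨r, rfl⟩ := Submodule.mem_span_singleton.1 hz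
  exact ⟨m, hm, r.unop, hmz⟩

theorem exists_mul_eq_one_of_forall_isCoatom_notMem {u : R}
    (hu : ∀ M : Submodule Rᵐᵒᵖ R, IsCoatom M → u ∉ M) : ∃ w, u * w = 1 := by
  by_contra! hno
  have hne : Rᵐᵒᵖ ∙ u ≠ ⊤ := fun htop ↦ by
    obtain ⟨c, hc⟩ := (Submodule.span_singleton_eq_top_iff _ u).1 htop 1
    exact hno c.unop hc
  obtain ⟨M, hM, hle⟩ := (eq_top_or_exists_le_coatom (Rᵐᵒᵖ ∙ u)).resolve_left hne
  exact hu M hM (hle (Submodule.mem_span_singleton_self u))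

theorem one_sub_pow_mul_pow_mem (hM_twoSided : ∀ r x : R, x ∈ M → r * x ∈ M) {a r : R}
    (har : 1 - a * r ∈ M) (n : ℕ) : 1 - a ^ n * r ^ n ∈ M := by
  induction n with
  | zero => simp
  | succ n ih =>
    have heq : 1 - a ^ (n + 1) * r ^ (n + 1) =
        (1 - a ^ n * r ^ n) + a ^ n * (1 - a * r) * r ^ n := by
      rw [pow_succ, pow_succ']; noncomm_ring
    rw [heq]
    exact M.add_mem ih (by simpa using M.smul_mem (op (r ^ n)) (hM_twoSided (a ^ n) _ har))

theorem mem_of_pow_mem_of_isCoatom (hM : IsCoatom M)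
    (hM_twoSided : ∀ r x : R, x ∈ M → r * x ∈ M) {a : R} {n : ℕ} (ha : a ^ n ∈ M) : a ∈ M := by
  by_contra haM
  obtain ⟨m, hm, r, hmr⟩ := exists_add_mul_eq_one_of_notMem hM haM
  have har : 1 - a * r ∈ M := by rwa [← hmr, add_sub_cancel_right]
  have hpow := one_sub_pow_mul_pow_mem hM_twoSided har n
  refine one_notMem_of_isCoatom hM ?_
  have hpow' : a ^ n * r ^ n ∈ M := M.smul_mem (op (r ^ n)) ha
  simpa only [sub_add_cancel] using M.add_mem hpow hpow'

end RightIdeal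

section Jacobson

theorem isUnit_one_add_mul_of_forall_exists_mul_eq_one {x : R}
    (h : ∀ y, ∃ w, (1 + x * y) * w = 1) (y : R) : IsUnit (1 + x * y) := by
  obtain ⟨w, hw⟩ := h y
  obtain ⟨v, hv⟩ : ∃ v, w * v = 1 := by
    have hweq : w = 1 + x * -(y * w) := by
      rw [mul_neg, ← mul_assoc]
      exact eq_add_neg_of_add_eq (by rwa [add_mul, one_mul] at hw)
    rw [hweq]
    exact h _
  have hvy : 1 + x * y = v := left_inv_eq_right_inv hw hv
  exact ⟨⟨1 + x * y, w, hw, hvy ▸ hv⟩, rfl⟩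

theorem isUnit_one_add_of_mem_jacobson {x : R} (hx : x ∈ Ideal.jacobson (⊥ : Ideal R)) :
    IsUnit (1 + x) := by
  have left_inv : ∀ j ∈ Ideal.jacobson (⊥ : Ideal R), ∃ z, z * (1 + j) = 1 := fun j hj ↦ by
    obtain ⟨z, hz⟩ := Ideal.mem_jacobson_iff.1 hj 1
    rw [Submodule.mem_bot, sub_eq_zero, mul_one] at hz
    exact ⟨z, by rwa [mul_add, mul_one, add_comm]⟩
  obtain ⟨z, hz⟩ := left_inv x hx
  obtain ⟨w, hw⟩ : ∃ w, w * z = 1 := by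
    have hzeq : z = 1 + -(z * x) := eq_add_neg_of_add_eq (by rwa [mul_add, mul_one] at hz)
    rw [hzeq]
    exact left_inv _ (neg_mem (Ideal.mul_mem_left _ z hx))
  have hwx : w = 1 + x := left_inv_eq_right_inv hw hz
  exact ⟨⟨1 + x, z, hwx ▸ hw, hz⟩, rfl⟩

theorem mem_of_mem_jacobson_of_isCoatom {M : Submodule Rᵐᵒᵖ R} (hM : IsCoatom M) {x : R}
    (hx : x ∈ Ideal.jacobson (⊥ : Ideal R)) : x ∈ M := by
  by_contra hxM
  obtain ⟨m, hm, r, hmr⟩ := exists_add_mul_eq_one_of_notMem hM hxM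
  have hxr : -(x * r) ∈ Ideal.jacobson (⊥ : Ideal R) :=
    neg_mem (Ideal.mul_mem_right r _ hx)
  obtain ⟨u, hu⟩ := isUnit_one_add_of_mem_jacobson hxr
  have hmu : m = u := by rw [hu, ← hmr, add_neg_cancel_right]
  refine one_notMem_of_isCoatom hM ?_
  simpa [hmu] using M.smul_mem (op (↑u⁻¹ : R)) hm

theorem mem_jacobson_of_forall_isCoatom_mem {x : R}
    (hx : ∀ M : Submodule Rᵐᵒᵖ R, IsCoatom M → x ∈ M) : x ∈ Ideal.jacobson (⊥ : Ideal R) := by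
  have right_inv : ∀ y, ∃ w, (1 + x * y) * w = 1 := fun y ↦
    exists_mul_eq_one_of_forall_isCoatom_notMem fun M hM h1 ↦ one_notMem_of_isCoatom hM <| by
      have hxy : x * y ∈ M := M.smul_mem (op y) (hx M hM)
      simpa only [add_sub_cancel_right] using M.sub_mem h1 hxy
  refine Ideal.mem_jacobson_iff.2 fun y ↦ ?_
  obtain ⟨u, hu⟩ :=
    isUnit_one_add_mul_comm.1 (isUnit_one_add_mul_of_forall_exists_mul_eq_one right_inv y)
  refine ⟨↑u⁻¹, ?_⟩
  rw [Submodule.mem_bot, sub_eq_zero, mul_assoc, ← mul_add_one, add_comm, ← hu, u.inv_mul]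

theorem mem_jacobson_bot_iff_forall_isCoatom_mem {x : R} :
    x ∈ Ideal.jacobson (⊥ : Ideal R) ↔ ∀ M : Submodule Rᵐᵒᵖ R, IsCoatom M → x ∈ M :=
  ⟨fun hx _ hM ↦ mem_of_mem_jacobson_of_isCoatom hM hx, mem_jacobson_of_forall_isCoatom_mem⟩

theorem RightQuasiDuo.mem_jacobson_of_pow_mem (h : RightQuasiDuo R) {a : R} {n : ℕ}
    (ha : a ^ n ∈ Ideal.jacobson (⊥ : Ideal R)) : a ∈ Ideal.jacobson (⊥ : Ideal R) := by
  rw [mem_jacobson_bot_iff_forall_isCoatom_mem] at ha ⊢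
  exact fun M hM ↦ mem_of_pow_mem_of_isCoatom hM (h M hM) (ha M hM)

end Jacobson

end

theorem stmt1 (R : Type*) [Ring R] (S : Type*) [Ring S]
    (f : R →+* S) (hf : Function.Surjective f)
    (hker : ∀ x : R, f x = 0 ↔ x ∈ Ideal.jacobson (⊥ : Ideal R))
    (h : RightQuasiDuo R) : IsReduced S := by
  refine ⟨fun s ⟨n, hn⟩ ↦ ?_⟩
  obtain ⟨r, rfl⟩ := hf s
  have hrn : r ^ n ∈ Ideal.jacobson (⊥ : Ideal R) := (hker _).1 (by rw [map_pow, hn])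
  exact (hker r).2 (h.mem_jacobson_of_pow_mem hrn)
end

section
/- If R is a right quasi-duo ring, then every right primitive quotient of R is a division ring; that is, for every right primitive ideal P of R, the ring R/P is a division ring. -/
open MulOpposite

theorem isUnit_of_forall_exists_mul_eq_one {M₀ : Type*} [MonoidWithZero M₀]
    (h : ∀ a : M₀, a ≠ 0 → ∃ b, a * b = 1) {a : M₀} (ha : a ≠ 0) : IsUnit a := by
  obtain ⟨b, hab⟩ := h a ha
  have hb : b ≠ 0 := by
    rintro rfl
    exact ha (by simpa using congrArg (a * ·) hab.symm)
  obtain ⟨c, hbc⟩ := h b hb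
  have hac : a = c := calc
    a = a * (b * c) := by rw [hbc, mul_one]
    _ = c := by rw [← mul_assoc, hab, one_mul]
  exact isUnit_iff_exists.mpr ⟨b, hab, hac ▸ hbc⟩

section RightIdeal

variable {R : Type*} [Ring R]

theorem Submodule.exists_mul_sub_one_mem_of_isCoatom {I : Submodule Rᵐᵒᵖ R} (hI : IsCoatom I)
    {a : R} (ha : a ∉ I) : ∃ c : R, a * c - 1 ∈ I := by
  have hsup : I ⊔ span Rᵐᵒᵖ {a} = ⊤ :=
    hI.lt_iff.mp (left_lt_sup.mpr fun h ↦ ha (h (mem_span_singleton_self a)))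
  have hone : (1 : R) ∈ I ⊔ span Rᵐᵒᵖ {a} := hsup ▸ mem_top
  obtain ⟨y, hy, z, hz, hyz⟩ := mem_sup.mp hone
  obtain ⟨c, rfl⟩ := mem_span_singleton.mp hz
  refine ⟨c.unop, ?_⟩
  have : a * c.unop - 1 = -y := by rw [← smul_eq_mul_unop, ← hyz]; abel
  simpa [this] using hy

namespace TwoSidedIdeal

variable (P : TwoSidedIdeal R) {I : Submodule Rᵐᵒᵖ R}

theorem coe_eq_coe_iff {a b : R} : (a : P.ringCon.Quotient) = b ↔ a - b ∈ P := by
  rw [RingCon.eq, P.rel_iff]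

theorem nontrivial_quotient_of_isCoatom (hI : IsCoatom I) (hPI : ∀ x, x ∈ P ↔ x ∈ I) :
    Nontrivial P.ringCon.Quotient := by
  refine ⟨(1 : R), (0 : R), fun h ↦ hI.1 ?_⟩
  rw [coe_eq_coe_iff, sub_zero, hPI] at h
  exact eq_top_iff.mpr fun y _ ↦ by simpa using I.smul_mem (MulOpposite.op y) h

theorem exists_mul_eq_one_of_isCoatom (hI : IsCoatom I) (hPI : ∀ x, x ∈ P ↔ x ∈ I)
    (x : P.ringCon.Quotient) (hx : x ≠ 0) : ∃ y, x * y = 1 := by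
  induction x using Quotient.inductionOn' with | h a => ?_
  have ha : a ∉ I := fun ha ↦ hx <| (P.coe_eq_coe_iff (b := 0)).mpr (by simpa [hPI] using ha)
  obtain ⟨c, hc⟩ := Submodule.exists_mul_sub_one_mem_of_isCoatom hI ha
  exact ⟨(c : R), (P.coe_eq_coe_iff (a := a * c) (b := 1)).mpr ((hPI _).mpr hc)⟩

end TwoSidedIdeal

variable {M : Type*} [AddCommGroup M] [Module Rᵐᵒᵖ M]

def rightOrbitMap (m : M) : R →ₗ[Rᵐᵒᵖ] M where
  toFun r := op r • m
  map_add' x y := by rw [op_add, add_smul]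
  map_smul' a x := by
    rw [RingHom.id_apply, smul_eq_mul_unop, op_mul, op_unop, mul_smul]

@[simp]
theorem rightOrbitMap_apply (m : M) (r : R) : rightOrbitMap m r = op r • m := rfl

theorem rightOrbitMap_surjective [IsSimpleModule Rᵐᵒᵖ M] {m : M} (hm : m ≠ 0) :
    Function.Surjective (rightOrbitMap (R := R) m) := by
  refine LinearMap.range_eq_top.mp <| (eq_bot_or_eq_top _).resolve_left fun h ↦ hm ?_
  simpa [h] using LinearMap.mem_range_self (rightOrbitMap (R := R) m) 1

theorem mem_ker_rightOrbitMap_iff_forall_smul_eq_zero {m : M}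
    (hsurj : Function.Surjective (rightOrbitMap (R := R) m))
    (htwo : ∀ r x : R, x ∈ LinearMap.ker (rightOrbitMap m) →
      r * x ∈ LinearMap.ker (rightOrbitMap m))
    (x : R) : x ∈ LinearMap.ker (rightOrbitMap m) ↔ ∀ n : M, op x • n = 0 := by
  refine ⟨fun hx n ↦ ?_, fun hx ↦ hx m⟩
  obtain ⟨r, rfl⟩ := hsurj n
  simpa [← mul_smul] using htwo r x hx

end RightIdeal

theorem stmt3 (R : Type*) [Ring R] (h : RightQuasiDuo R)
    (P : TwoSidedIdeal R) (M : Type*) [AddCommGroup M] [Module Rᵐᵒᵖ M]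
    [IsSimpleModule Rᵐᵒᵖ M]
    (hP : ∀ r : R, r ∈ P ↔ ∀ m : M, MulOpposite.op r • m = 0) :
    Nontrivial P.ringCon.Quotient ∧
      ∀ x : P.ringCon.Quotient, x ≠ 0 → IsUnit x := by
  have : Nontrivial M := IsSimpleModule.nontrivial Rᵐᵒᵖ M
  obtain ⟨m, hm⟩ := exists_ne (0 : M)
  have hsurj := rightOrbitMap_surjective (R := R) hm
  have hI := LinearMap.isCoatom_ker_of_surjective hsurj
  have hPI : ∀ x, x ∈ P ↔ x ∈ LinearMap.ker (rightOrbitMap m) := fun x ↦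
    (hP x).trans (mem_ker_rightOrbitMap_iff_forall_smul_eq_zero hsurj (h _ hI) x).symm
  exact ⟨P.nontrivial_quotient_of_isCoatom hI hPI, fun _ hx ↦
    isUnit_of_forall_exists_mul_eq_one (P.exists_mul_eq_one_of_isCoatom hI hPI) hx⟩
end

section
/- Let R be a unital subring of a right quasi-duo ring T. If I is a maximal right ideal of R such that the right ideal IT generated by I in T is proper (IT ≠ T), then I is a two-sided ideal of R. -/
theorem stmt5 (R T : Type*) [Ring R] [Ring T] (f : R →+* T)
    (hf : Function.Injective f) (hT : RightQuasiDuo T)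
    (I : Submodule Rᵐᵒᵖ R) (hI : IsCoatom I)
    (hIT : Submodule.span Tᵐᵒᵖ (f '' (I : Set R)) ≠ ⊤) :
    ∀ r x : R, x ∈ I → r * x ∈ I := by
  -- the lattice of right ideals of T is coatomic
  have hfg : (⊤ : Submodule Tᵐᵒᵖ T).FG := by
    refine ⟨{1}, ?_⟩
    rw [eq_top_iff]
    intro x _
    simpa using Submodule.smul_mem _ (MulOpposite.op x)
      (Submodule.subset_span (by simp) : (1 : T) ∈ _)
  have hcoatomic : IsCoatomic (Submodule Tᵐᵒᵖ T) :=
    CompleteLattice.coatomic_of_top_compact ((Submodule.fg_iff_compact _).mp hfg)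
  obtain ⟨M, hM, hle⟩ :=
    (hcoatomic.eq_top_or_exists_le_coatom
      (Submodule.span Tᵐᵒᵖ (f '' (I : Set R)))).resolve_left hIT
  -- pull M back to a right ideal J of R
  let J : Submodule Rᵐᵒᵖ R :=
    { carrier := {x | f x ∈ M}
      add_mem' := fun hx hy => by simpa using M.add_mem hx hy
      zero_mem' := by simp
      smul_mem' := fun r x hx => by
        simpa using M.smul_mem (MulOpposite.op (f r.unop)) hx }
  have hIJ : I ≤ J := fun x hx =>
    hle (Submodule.subset_span ⟨x, hx, rfl⟩)
  have hJne : J ≠ ⊤ := by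
    intro h
    have h1 : (1 : R) ∈ J := h ▸ Submodule.mem_top
    have h1f : f (1 : R) ∈ M := h1
    have h2 : (1 : T) ∈ M := by simpa using h1f
    exact hM.1 (Submodule.eq_top_iff'.mpr fun x => by
      simpa using M.smul_mem (MulOpposite.op x) h2)
  have hJI : J = I := by
    by_contra h
    exact hJne (hI.2 J (lt_of_le_of_ne hIJ (Ne.symm h)))
  intro r x hx
  have hfx : f x ∈ M := hIJ hx
  have : f r * f x ∈ M := hT M hM (f r) (f x) hfx
  have : f (r * x) ∈ M := by simpa using this
  rw [← hJI]
  exact this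
end

section
/- A ring R is right quasi-duo if and only if for all a, b ∈ R, the equality Ra + Rb = R implies aR + bR = R. -/
private lemma coatomic_right (R : Type*) [Ring R] : IsCoatomic (Submodule Rᵐᵒᵖ R) :=
  CompleteLattice.coatomic_of_top_compact
    ((Submodule.fg_iff_compact _).mp ⟨{1}, Submodule.eq_top_iff'.mpr fun x => by
      simpa using Submodule.mem_span_singleton.mpr
        ⟨MulOpposite.op x, by simp [MulOpposite.smul_eq_mul_unop]⟩⟩)

theorem stmt6 (R : Type*) [Ring R] :
    RightQuasiDuo R ↔
      ∀ a b : R,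
        Submodule.span R ({a} : Set R) ⊔ Submodule.span R ({b} : Set R) = ⊤ →
        Submodule.span Rᵐᵒᵖ ({a} : Set R) ⊔ Submodule.span Rᵐᵒᵖ ({b} : Set R) = ⊤ := by
  constructor
  · -- forward
    intro hqd a b hab
    by_contra hne
    obtain ⟨M, hM, hle⟩ := ((coatomic_right R).eq_top_or_exists_le_coatom _).resolve_left hne
    have haM : a ∈ M := hle (Submodule.mem_sup_left (Submodule.mem_span_singleton_self a))
    have hbM : b ∈ M := hle (Submodule.mem_sup_right (Submodule.mem_span_singleton_self b))
    have h1 : (1 : R) ∈ Submodule.span R ({a} : Set R) ⊔ Submodule.span R ({b} : Set R) := by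
      rw [hab]; trivial
    obtain ⟨x, hx, y, hy, hxy⟩ := Submodule.mem_sup.mp h1
    obtain ⟨r, rfl⟩ := Submodule.mem_span_singleton.mp hx
    obtain ⟨s, rfl⟩ := Submodule.mem_span_singleton.mp hy
    have hone : (1 : R) ∈ M := by
      rw [← hxy]
      exact M.add_mem (hqd M hM r a haM) (hqd M hM s b hbM)
    exact hM.1 (Submodule.eq_top_iff'.mpr fun z => by
      simpa using M.smul_mem (MulOpposite.op z) hone)
  · -- backward
    intro hcond M hM r x hxM
    by_contra hrx
    have hsup : M ⊔ Submodule.span Rᵐᵒᵖ ({r * x} : Set R) = ⊤ := by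
      refine hM.2 _ (lt_of_le_of_ne le_sup_left fun h => hrx ?_)
      exact h ▸ Submodule.mem_sup_right (Submodule.mem_span_singleton_self _)
    have h1 : (1 : R) ∈ M ⊔ Submodule.span Rᵐᵒᵖ ({r * x} : Set R) := by rw [hsup]; trivial
    obtain ⟨m, hm, y, hy, hmy⟩ := Submodule.mem_sup.mp h1
    obtain ⟨s, rfl⟩ := Submodule.mem_span_singleton.mp hy
    set a : R := x * s.unop with ha
    have haM : a ∈ M := by simpa [ha, MulOpposite.smul_eq_mul_unop] using M.smul_mem s hxM
    have hmval : m = 1 - r * a := by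
      have : s • (r * x) = r * a := by
        simp [ha, MulOpposite.smul_eq_mul_unop, mul_assoc]
      rw [this] at hmy; exact eq_sub_of_add_eq hmy
    have hspan : Submodule.span R ({a} : Set R) ⊔ Submodule.span R ({1 - r * a} : Set R) = ⊤ := by
      refine Submodule.eq_top_iff'.mpr fun z => ?_
      have h1' : (1 : R) ∈ Submodule.span R ({a} : Set R) ⊔
          Submodule.span R ({1 - r * a} : Set R) := by
        have := Submodule.add_mem _
          (Submodule.mem_sup_left (S := Submodule.span R ({a} : Set R))
            (Submodule.smul_mem _ r (Submodule.mem_span_singleton_self a)))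
          (Submodule.mem_sup_right (T := Submodule.span R ({1 - r * a} : Set R))
            (Submodule.mem_span_singleton_self (1 - r * a)))
        simpa using this
      simpa using Submodule.smul_mem _ z h1'
    have htop := hcond a (1 - r * a) hspan
    have hle : Submodule.span Rᵐᵒᵖ ({a} : Set R) ⊔ Submodule.span Rᵐᵒᵖ ({1 - r * a} : Set R) ≤ M := by
      refine sup_le ?_ ?_
      · rwa [Submodule.span_singleton_le_iff_mem]
      · rw [Submodule.span_singleton_le_iff_mem, ← hmval]; exact hm
    exact hM.1 (top_le_iff.mp (htop ▸ hle))
end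

section
/- If R is a right quasi-duo ring and e is a nonzero idempotent of R, then the corner ring eRe is right quasi-duo. -/
/-- `I` is a right ideal of the corner ring `eRe` (carrier `{x | e * x * e = x}`). -/
def IsRightIdealOfCorner (R : Type*) [Ring R] (e : R) (I : Set R) : Prop :=
  I ⊆ {x : R | e * x * e = x} ∧ (0 : R) ∈ I ∧
    (∀ x ∈ I, ∀ y ∈ I, x + y ∈ I) ∧ (∀ x ∈ I, -x ∈ I) ∧
    ∀ x ∈ I, ∀ r : R, e * r * e = r → x * r ∈ I

private lemma corner_eL {R : Type*} [Ring R] {e x : R} (he : e * e = e)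
    (hx : e * x * e = x) : e * x = x := by
  have h : e * (e * x * e) = e * x * e := by
    rw [← mul_assoc, ← mul_assoc, he]
  rw [← hx]; exact h

private lemma corner_eR {R : Type*} [Ring R] {e x : R} (he : e * e = e)
    (hx : e * x * e = x) : x * e = x := by
  have h : (e * x * e) * e = e * x * e := by
    rw [mul_assoc, he]
  rw [← hx]; exact h

private lemma corner_self {R : Type*} [Ring R] {e r : R} (he : e * e = e) :
    e * (e * r * e) * e = e * r * e := by
  have h1 : e * (e * r * e) = e * r * e := by
    rw [← mul_assoc, ← mul_assoc, he]
  rw [h1, mul_assoc, he]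

theorem stmt7 (R : Type*) [Ring R] (h : RightQuasiDuo R)
    (e : R) (he : e * e = e) (hne : e ≠ 0)
    (I : Set R) (hI : IsRightIdealOfCorner R e I)
    (hproper : I ≠ {x : R | e * x * e = x})
    (hmax : ∀ J : Set R, IsRightIdealOfCorner R e J → I ⊆ J →
      J = I ∨ J = {x : R | e * x * e = x}) :
    ∀ x ∈ I, ∀ r : R, e * r * e = r → r * x ∈ I := by
  obtain ⟨hsub, h0, hadd, hneg, hmul⟩ := hI
  -- e ∉ I (else I would be all of the corner)
  have heI : e ∉ I := by
    intro heI'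
    apply hproper
    ext y
    constructor
    · exact fun hy => hsub hy
    · intro hy
      have hy' : e * y * e = y := hy
      have := hmul e heI' y hy
      rwa [corner_eL he hy'] at this
  -- The right ideal of R generated by I and (1 - e)
  set K : Submodule Rᵐᵒᵖ R := Submodule.span Rᵐᵒᵖ (I ∪ {1 - e}) with hK
  -- key invariant on K
  have hKinv : ∀ k ∈ K, ∀ r : R, e * (k * r) * e ∈ I := by
    intro k hk
    refine Submodule.span_induction ?_ ?_ ?_ ?_ hk
    · rintro x (hx | hx)
      · intro r
        have hxe : e * x * e = x := hsub hx
        have h1 : e * (x * r) * e = x * (e * r * e) := by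
          rw [show e * (x * r) * e = (e * x) * (r * e) by noncomm_ring,
            corner_eL he hxe, show x * (r * e) = (x * e) * (r * e) by rw [corner_eR he hxe],
            show (x * e) * (r * e) = x * (e * r * e) by noncomm_ring]
        rw [h1]
        exact hmul x hx _ (corner_self he)
      · intro r
        simp only [Set.mem_singleton_iff] at hx
        subst hx
        have h1 : e * (1 - e) = 0 := by
          rw [mul_sub, mul_one, he, sub_self]
        have : e * ((1 - e) * r) * e = 0 := by
          rw [show e * ((1 - e) * r) * e = (e * (1 - e)) * r * e by noncomm_ring, h1]
          simp
        rw [this]; exact h0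
    · intro r; simpa using h0
    · intro x y _ _ hx hy r
      have : e * ((x + y) * r) * e = e * (x * r) * e + e * (y * r) * e := by noncomm_ring
      rw [this]
      exact hadd _ (hx r) _ (hy r)
    · intro a x _ hx r
      have h1 : a • x = x * a.unop := MulOpposite.smul_eq_mul_unop ..
      have h2 : e * ((x * a.unop) * r) * e = e * (x * (a.unop * r)) * e := by noncomm_ring
      rw [h1, h2]
      exact hx (a.unop * r)
  -- e ∉ K
  have heK : e ∉ K := by
    intro hK'
    have := hKinv e hK' e
    rw [show e * (e * e) * e = e by rw [he, he, he]] at this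
    exact heI this
  have hKtop : K ≠ ⊤ := fun h' => heK (h' ▸ Submodule.mem_top)
  -- find a maximal right ideal P containing K
  have : IsCoatomic (Submodule Rᵐᵒᵖ R) := by
    apply CompleteLattice.coatomic_of_top_compact
    have htop : (⊤ : Submodule Rᵐᵒᵖ R) = Submodule.span Rᵐᵒᵖ {(1 : R)} := by
      rw [eq_comm, eq_top_iff]
      intro x _
      have hx1 : x = (MulOpposite.op x) • (1 : R) := by
        simp [MulOpposite.smul_eq_mul_unop]
      rw [hx1]
      exact Submodule.smul_mem _ _ (Submodule.subset_span rfl)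
    rw [htop]
    exact Submodule.singleton_span_isCompactElement 1
  obtain ⟨P, hPco, hKP⟩ := (eq_top_or_exists_le_coatom K).resolve_left hKtop
  have hIK : I ⊆ K := fun x hx => Submodule.subset_span (Or.inl hx)
  have hIP : I ⊆ P := fun x hx => hKP (hIK hx)
  have h1eP : (1 - e) ∈ P := hKP (Submodule.subset_span (Or.inr rfl))
  have heP : e ∉ P := by
    intro heP'
    apply hPco.1
    rw [eq_top_iff]
    intro x _
    have h1 : (1 : R) ∈ P := by
      have := P.add_mem heP' h1eP
      simpa using this
    have hx1 : x = (MulOpposite.op x) • (1 : R) := by simp [MulOpposite.smul_eq_mul_unop]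
    rw [hx1]
    exact Submodule.smul_mem _ _ h1
  -- P is two-sided
  have hP2 : ∀ r x : R, x ∈ P → r * x ∈ P := h P hPco
  -- M := P ∩ corner
  set M : Set R := {x : R | x ∈ P ∧ e * x * e = x} with hM
  have hMideal : IsRightIdealOfCorner R e M := by
    refine ⟨fun x hx => hx.2, ⟨P.zero_mem, by simp⟩, ?_, ?_, ?_⟩
    · rintro x ⟨hx1, hx2⟩ y ⟨hy1, hy2⟩
      exact ⟨P.add_mem hx1 hy1, by rw [mul_add, add_mul, hx2, hy2]⟩
    · rintro x ⟨hx1, hx2⟩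
      exact ⟨P.neg_mem hx1, by rw [mul_neg, neg_mul, hx2]⟩
    · rintro x ⟨hx1, hx2⟩ r hr
      refine ⟨?_, ?_⟩
      · have := P.smul_mem (MulOpposite.op r) hx1
        rwa [MulOpposite.smul_eq_mul_unop] at this
      · rw [show e * (x * r) * e = (e * x) * (r * e) by noncomm_ring,
          corner_eL he hx2, corner_eR he hr]
  have hIM : I ⊆ M := fun x hx => ⟨hIP hx, hsub hx⟩
  have hMne : M ≠ {x : R | e * x * e = x} := by
    intro hM'
    apply heP
    have heM : e ∈ M := by
      rw [hM']
      show e * e * e = e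
      rw [he, he]
    exact heM.1
  have hMI : M = I := (hmax M hMideal hIM).resolve_right hMne
  -- conclude
  intro x hx r hr
  have hrx : r * x ∈ P := hP2 r x (hIP hx)
  have hcorner : e * (r * x) * e = r * x := by
    rw [show e * (r * x) * e = (e * r) * (x * e) by noncomm_ring,
      corner_eL he hr, corner_eR he (hsub hx)]
  have hmem : r * x ∈ M := ⟨hrx, hcorner⟩
  rwa [hMI] at hmem
end

section
/- If the polynomial ring R[x] is right quasi-duo, then R is right quasi-duo. -/
lemma eq_top_of_one_mem {S : Type*} [Ring S] (K : Submodule Sᵐᵒᵖ S)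
    (h1 : (1 : S) ∈ K) : K = ⊤ := by
  ext y
  simp only [Submodule.mem_top, iff_true]
  have := K.smul_mem (MulOpposite.op y) h1
  simpa [MulOpposite.smul_eq_mul_unop] using this

theorem stmt9 (R : Type*) [Ring R] (h : RightQuasiDuo (Polynomial R)) :
    RightQuasiDuo R := by
  intro I hI r x hx
  -- the right ideal of polynomials whose constant coefficient lies in I
  set J : Submodule (Polynomial R)ᵐᵒᵖ (Polynomial R) :=
    { carrier := {f | f.coeff 0 ∈ I}
      add_mem' := fun {f g} hf hg => by
        simp only [Set.mem_setOf_eq, Polynomial.coeff_add] at *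
        exact I.add_mem hf hg
      zero_mem' := by simp
      smul_mem' := fun c f hf => by
        simp only [Set.mem_setOf_eq, MulOpposite.smul_eq_mul_unop,
          Polynomial.mul_coeff_zero] at *
        simpa [MulOpposite.smul_eq_mul_unop] using
          I.smul_mem (MulOpposite.op (c.unop.coeff 0)) hf } with hJ
  have memJ : ∀ f : Polynomial R, f ∈ J ↔ f.coeff 0 ∈ I := fun f => Iff.rfl
  have hJcoatom : IsCoatom J := by
    constructor
    · intro htop
      have h1 : (1 : Polynomial R) ∈ J := htop ▸ Submodule.mem_top
      rw [memJ, Polynomial.coeff_one_zero] at h1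
      exact hI.1 (eq_top_of_one_mem I h1)
    · intro K hK
      obtain ⟨f, hfK, hfJ⟩ := SetLike.exists_of_lt hK
      have hfI : f.coeff 0 ∉ I := fun hc => hfJ ((memJ f).mpr hc)
      have hsup : I ⊔ Submodule.span Rᵐᵒᵖ {f.coeff 0} = ⊤ := by
        apply hI.2
        refine lt_of_le_of_ne le_sup_left ?_
        intro heq
        exact hfI (heq ▸ (le_sup_right : _ ≤ I ⊔ Submodule.span Rᵐᵒᵖ {f.coeff 0})
          (Submodule.mem_span_singleton_self _))
      have h1 : (1 : R) ∈ I ⊔ Submodule.span Rᵐᵒᵖ {f.coeff 0} := hsup ▸ Submodule.mem_top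
      rw [Submodule.mem_sup] at h1
      obtain ⟨i, hi, t, ht, hit⟩ := h1
      rw [Submodule.mem_span_singleton] at ht
      obtain ⟨c, hc⟩ := ht
      -- 1 = (1 - C i - f * C c.unop) + C i + f * C c.unop, each term in K
      apply eq_top_of_one_mem
      have h2 : f * Polynomial.C c.unop ∈ K := by
        have := K.smul_mem (MulOpposite.op (Polynomial.C c.unop)) hfK
        simpa [MulOpposite.smul_eq_mul_unop] using this
      have h3 : Polynomial.C i ∈ K :=
        (le_of_lt hK) ((memJ _).mpr (by simpa using hi))
      have h4 : (1 : Polynomial R) - Polynomial.C i - f * Polynomial.C c.unop ∈ K := by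
        apply (le_of_lt hK)
        rw [memJ]
        have : ((1 : Polynomial R) - Polynomial.C i - f * Polynomial.C c.unop).coeff 0
            = 1 - i - f.coeff 0 * c.unop := by
          simp [Polynomial.mul_coeff_zero]
        rw [this]
        have hceq : f.coeff 0 * c.unop = t := by
          simpa [MulOpposite.smul_eq_mul_unop] using hc
        rw [hceq]
        have : (1 : R) - i - t = 0 := by rw [← hit]; abel
        rw [this]
        exact I.zero_mem
      have h5 := K.add_mem (K.add_mem h4 h3) h2
      have heq1 : (1 : Polynomial R) - Polynomial.C i - f * Polynomial.C c.unop
          + Polynomial.C i + f * Polynomial.C c.unop = 1 := by abel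
      rwa [heq1] at h5
  have hmem : Polynomial.C x ∈ J := (memJ _).mpr (by simpa using hx)
  have := h J hJcoatom (Polynomial.C r) (Polynomial.C x) hmem
  rw [memJ] at this
  simpa [Polynomial.mul_coeff_zero] using this
end

section
/- If the polynomial ring R[x] is right quasi-duo, then for every natural number n ≥ 1 the subring R[x^n] of polynomials in x^n is right quasi-duo. -/
section transfer
variable {S T : Type*} [Ring S] [Ring T]

/-- Push forward a right ideal along a ring isomorphism. -/
def mapSub (e : S ≃+* T) (I : Submodule Sᵐᵒᵖ S) : Submodule Tᵐᵒᵖ T where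
  carrier := e '' I
  add_mem' := by
    rintro a b ⟨x, hx, rfl⟩ ⟨y, hy, rfl⟩
    exact ⟨x + y, I.add_mem hx hy, map_add e x y⟩
  zero_mem' := ⟨0, I.zero_mem, map_zero e⟩
  smul_mem' := by
    rintro c y ⟨x, hx, rfl⟩
    refine ⟨(MulOpposite.op (e.symm c.unop)) • x, I.smul_mem _ hx, ?_⟩
    simp [MulOpposite.smul_eq_mul_unop, map_mul]

lemma mem_mapSub (e : S ≃+* T) (I : Submodule Sᵐᵒᵖ S) (y : T) :
    y ∈ mapSub e I ↔ e.symm y ∈ I := by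
  constructor
  · rintro ⟨x, hx, rfl⟩; simpa using hx
  · intro hy; exact ⟨e.symm y, hy, by simp⟩

lemma mapSub_mapSub (e : S ≃+* T) (I : Submodule Tᵐᵒᵖ T) :
    mapSub e (mapSub e.symm I) = I := by
  ext y; simp [mem_mapSub]

lemma mapSub_mapSub' (e : S ≃+* T) (K : Submodule Sᵐᵒᵖ S) :
    mapSub e.symm (mapSub e K) = K := by
  ext y; simp [mem_mapSub]

lemma mapSub_top (e : S ≃+* T) : mapSub e ⊤ = ⊤ := by
  ext y; simp [mem_mapSub]

lemma mapSub_mono (e : S ≃+* T) {I J : Submodule Sᵐᵒᵖ S} (h : I ≤ J) :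
    mapSub e I ≤ mapSub e J := by
  intro y hy
  rw [mem_mapSub] at hy ⊢
  exact h hy

lemma rightQuasiDuo_of_equiv (e : S ≃+* T) (h : RightQuasiDuo S) : RightQuasiDuo T := by
  intro I hI r x hx
  set J := mapSub e.symm I with hJ
  have hmem : ∀ y : T, e.symm y ∈ J ↔ y ∈ I := by
    intro y
    rw [mem_mapSub]
    simp
  have hJco : IsCoatom J := by
    constructor
    · intro htop
      have : I = ⊤ := by
        rw [← mapSub_mapSub e I, ← hJ, htop, mapSub_top]
      exact hI.1 this
    · intro K hK
      have h1 : I ≤ mapSub e K := by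
        rw [← mapSub_mapSub e I, ← hJ]
        exact mapSub_mono e hK.le
      have h2 : I ≠ mapSub e K := by
        intro heq
        apply hK.ne
        rw [hJ, heq, mapSub_mapSub' e K]
      have : mapSub e K = ⊤ := hI.2 _ (lt_of_le_of_ne h1 h2)
      have := congrArg (mapSub e.symm) this
      rwa [mapSub_top, mapSub_mapSub' e K] at this
  have := h J hJco (e.symm r) (e.symm x) ((hmem x).2 hx)
  have : e.symm (r * x) ∈ J := by rwa [map_mul]
  exact (hmem _).1 this

end transfer

section iso
variable {R : Type*} [Ring R]

open Polynomial

noncomputable def phiHom (R : Type*) [Ring R] (n : ℕ) : Polynomial R →+* Polynomial R :=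
  eval₂RingHom' C (X ^ n) (fun a => (commute_X_pow (C a) n).symm)

lemma phi_coeff (n : ℕ) (hn : 1 ≤ n) (p : Polynomial R) (k : ℕ) :
    (phiHom R n p).coeff (n * k) = p.coeff k := by
  have : phiHom R n p = p.sum fun e a => C a * (X ^ n) ^ e := by
    simp [phiHom, eval₂RingHom', eval₂_eq_sum]
  rw [this]
  rw [Polynomial.sum_def]
  rw [finset_sum_coeff]
  have : ∀ e ∈ p.support, (C (p.coeff e) * (X ^ n) ^ e).coeff (n * k) =
      if e = k then p.coeff e else 0 := by
    intro e _
    rw [← pow_mul, coeff_C_mul, coeff_X_pow]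
    have : n * k = n * e ↔ e = k := by
      constructor
      · intro h
        exact (Nat.eq_of_mul_eq_mul_left (by omega) h).symm
      · rintro rfl; rfl
    by_cases he : e = k <;> simp [he, this, mul_comm]
  rw [Finset.sum_congr rfl this]
  by_cases hk : k ∈ p.support
  · rw [Finset.sum_ite_eq' p.support k (fun e => p.coeff e)]
    simp [hk]
  · rw [Finset.sum_ite_eq' p.support k (fun e => p.coeff e)]
    simp only [hk, if_false]
    simpa using (Polynomial.notMem_support_iff.1 hk).symm

lemma phi_injective (n : ℕ) (hn : 1 ≤ n) : Function.Injective (phiHom R n) := by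
  intro p q hpq
  ext k
  have := congrArg (fun r => Polynomial.coeff r (n * k)) hpq
  simpa [phi_coeff n hn] using this

lemma phi_range (n : ℕ) :
    (phiHom R n).range = Subring.closure
      (Set.range (Polynomial.C : R →+* Polynomial R) ∪ {Polynomial.X ^ n}) := by
  apply le_antisymm
  · rintro _ ⟨p, rfl⟩
    induction p using Polynomial.induction_on' with
    | add p q hp hq =>
      rw [map_add]; exact add_mem hp hq
    | monomial k a =>
      have : phiHom R n (monomial k a) = C a * (X ^ n) ^ k := by
        rw [← C_mul_X_pow_eq_monomial, map_mul, map_pow]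
        have h1 : phiHom R n (C a) = C a := by simp [phiHom, eval₂RingHom']
        have h2 : phiHom R n X = X ^ n := by simp [phiHom, eval₂RingHom']
        rw [h1, h2]
      rw [this]
      have hX : (X : Polynomial R) ^ n ∈ Subring.closure
          (Set.range (Polynomial.C : R →+* Polynomial R) ∪ {Polynomial.X ^ n}) :=
        Subring.subset_closure (by simp)
      have hC : (C a : Polynomial R) ∈ Subring.closure
          (Set.range (Polynomial.C : R →+* Polynomial R) ∪ {Polynomial.X ^ n}) :=
        Subring.subset_closure (Or.inl ⟨a, rfl⟩)
      exact mul_mem hC (pow_mem hX k)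
  · rw [Subring.closure_le]
    rintro y (⟨a, rfl⟩ | rfl)
    · exact ⟨C a, by simp [phiHom, eval₂RingHom']⟩
    · exact ⟨X, by simp [phiHom, eval₂RingHom']⟩

end iso

theorem stmt10 (R : Type*) [Ring R] (h : RightQuasiDuo (Polynomial R))
    (n : ℕ) (hn : 1 ≤ n) :
    RightQuasiDuo (Subring.closure
      (Set.range (Polynomial.C : R →+* Polynomial R) ∪ {Polynomial.X ^ n})) := by
  have e1 : Polynomial R ≃+* (phiHom R n).range :=
    RingEquiv.ofLeftInverse (g := Function.invFun (phiHom R n))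
      (Function.leftInverse_invFun (phi_injective n hn))
  have e2 := RingEquiv.subringCongr (phi_range (R := R) n)
  exact rightQuasiDuo_of_equiv (e1.trans e2) h
end

section
/- If a finite subdirect product decomposition holds, quasi-duo passes down: if I and J are two-sided ideals of a ring R with I ∩ J = 0 and both R/I and R/J are right quasi-duo, then R is right quasi-duo. -/
lemma one_not_mem_of_ne_top {R : Type*} [Ring R] {M : Submodule Rᵐᵒᵖ R}
    (h : M ≠ ⊤) : (1 : R) ∉ M := by
  intro h1
  apply h
  rw [Submodule.eq_top_iff']
  intro y
  have := M.smul_mem (MulOpposite.op y) h1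
  simpa using this

lemma quasiDuo_pushforward {R S : Type*} [Ring R] [Ring S] (f : R →+* S)
    (hf : Function.Surjective f) (hS : RightQuasiDuo S)
    (M : Submodule Rᵐᵒᵖ R) (hM : IsCoatom M)
    (hker : ∀ y : R, f y = 0 → y ∈ M) : ∀ r x : R, x ∈ M → r * x ∈ M := by
  have h1M : (1 : R) ∉ M := one_not_mem_of_ne_top hM.1
  set N : Submodule Sᵐᵒᵖ S :=
    { carrier := f '' M
      add_mem' := by
        rintro _ _ ⟨m, hm, rfl⟩ ⟨n, hn, rfl⟩
        exact ⟨m + n, M.add_mem hm hn, map_add f m n⟩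
      zero_mem' := ⟨0, M.zero_mem, map_zero f⟩
      smul_mem' := by
        rintro s _ ⟨m, hm, rfl⟩
        obtain ⟨c, hc⟩ := hf s.unop
        refine ⟨m * c, M.smul_mem (MulOpposite.op c) hm, ?_⟩
        rw [map_mul, hc]
        rfl } with hNdef
  have hmemN : ∀ s : S, s ∈ N ↔ ∃ m ∈ M, f m = s := by
    intro s
    constructor
    · rintro ⟨m, hm, rfl⟩; exact ⟨m, hm, rfl⟩
    · rintro ⟨m, hm, rfl⟩; exact ⟨m, hm, rfl⟩
  have hN : IsCoatom N := by
    constructor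
    · intro htop
      have : (1 : S) ∈ N := htop ▸ Submodule.mem_top
      obtain ⟨m, hm, hm1⟩ := (hmemN 1).mp this
      have : m - 1 ∈ M := hker _ (by rw [map_sub, hm1, map_one, sub_self])
      have : (1 : R) ∈ M := by simpa using M.sub_mem hm this
      exact h1M this
    · intro N' hN'
      -- pull back N' to R
      set P : Submodule Rᵐᵒᵖ R :=
        { carrier := f ⁻¹' N'
          add_mem' := fun {a b} ha hb => by
            simp only [Set.mem_preimage, map_add] at *
            exact N'.add_mem ha hb
          zero_mem' := by simp only [Set.mem_preimage, map_zero]; exact N'.zero_mem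
          smul_mem' := fun c a ha => by
            simp only [Set.mem_preimage] at *
            have : f (c • a) = (MulOpposite.op (f c.unop)) • f a := by
              show f (a * c.unop) = f a * f c.unop
              rw [map_mul]
            rw [this]
            exact N'.smul_mem _ ha } with hPdef
      have hMP : M ≤ P := by
        intro m hm
        show f m ∈ N'
        exact hN'.le ((hmemN (f m)).mpr ⟨m, hm, rfl⟩)
      obtain ⟨s, hsN', hsN⟩ := SetLike.exists_of_lt hN'
      obtain ⟨y, rfl⟩ := hf s
      have hyP : y ∈ P := hsN'
      have hyM : y ∉ M := fun h => hsN ((hmemN _).mpr ⟨y, h, rfl⟩)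
      have : P = ⊤ := hM.2 P (lt_of_le_of_ne hMP (fun h => hyM (h ▸ hyP)))
      have h1P : (1 : R) ∈ P := this ▸ Submodule.mem_top
      have h1N' : (1 : S) ∈ N' := by simpa using (show f 1 ∈ N' from h1P)
      rw [Submodule.eq_top_iff']
      intro s
      have := N'.smul_mem (MulOpposite.op s) h1N'
      simpa using this
  intro r x hx
  have hfx : f x ∈ N := (hmemN _).mpr ⟨x, hx, rfl⟩
  have := hS N hN (f r) (f x) hfx
  rw [← map_mul] at this
  obtain ⟨m, hm, hmeq⟩ := (hmemN _).mp this
  have : r * x - m ∈ M := hker _ (by rw [map_sub, hmeq, sub_self])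
  simpa using M.add_mem this hm

theorem stmt11 (R S T : Type*) [Ring R] [Ring S] [Ring T]
    (f : R →+* S) (hf : Function.Surjective f)
    (g : R →+* T) (hg : Function.Surjective g)
    (hker : ∀ x : R, f x = 0 → g x = 0 → x = 0)
    (hS : RightQuasiDuo S) (hT : RightQuasiDuo T) : RightQuasiDuo R := by
  intro M hM
  by_cases hf' : ∀ y : R, f y = 0 → y ∈ M
  · exact quasiDuo_pushforward f hf hS M hM hf'
  · push_neg at hf'
    obtain ⟨a, haf, haM⟩ := hf'
    have hg' : ∀ y : R, g y = 0 → y ∈ M := by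
      intro b hb
      -- M ⊔ span {a} = ⊤
      have hlt : M < M ⊔ Submodule.span Rᵐᵒᵖ {a} := by
        refine lt_of_le_of_ne le_sup_left (fun h => haM ?_)
        rw [h]
        exact Submodule.mem_sup_right (Submodule.mem_span_singleton_self a)
      have htop : M ⊔ Submodule.span Rᵐᵒᵖ {a} = ⊤ := hM.2 _ hlt
      have h1 : (1 : R) ∈ M ⊔ Submodule.span Rᵐᵒᵖ {a} := htop ▸ Submodule.mem_top
      obtain ⟨m, hm, z, hz, hmz⟩ := Submodule.mem_sup.mp h1
      obtain ⟨c, rfl⟩ := Submodule.mem_span_singleton.mp hz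
      -- c • a = a * c.unop, which is in ker f
      have hzf : f (c • a) = 0 := by
        show f (a * c.unop) = 0
        rw [map_mul, haf, zero_mul]
      -- (c • a) * b = 0
      have hzb : (c • a) * b = 0 := by
        apply hker
        · show f (a * c.unop * b) = 0
          rw [map_mul, map_mul, haf, zero_mul, zero_mul]
        · show g (a * c.unop * b) = 0
          rw [mul_assoc, map_mul, map_mul, hb, mul_zero, mul_zero]
      have : b = m * b := by
        have := congrArg (· * b) hmz
        simp only [add_mul, one_mul] at this
        rw [hzb, add_zero] at this
        exact this.symm
      rw [this]
      have := M.smul_mem (MulOpposite.op b) hm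
      simpa using this
    exact quasiDuo_pushforward g hg hT M hM hg'
end

section
/- If I is a nil two-sided ideal of a ring R and R/I is right quasi-duo, then R is right quasi-duo. -/
/-!
The kernel of `f` is a nil two-sided ideal, so it lies in every maximal right ideal `M` of `R`:
otherwise `1 = m + k c` with `k c` nilpotent, making `m ∈ M` a unit. Hence `f` maps `M` onto a
maximal right ideal of `S`, which is two-sided, and pulling back gives `r x ∈ M + ker f = M`.
-/

open MulOpposite Submodule

@[simps]
def RingHom.toOpSemilinearMap {R S : Type*} [Semiring R] [Semiring S] (f : R →+* S) :
    R →ₛₗ[RingHom.op f] S where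
  toFun := f
  map_add' := map_add f
  map_smul' c x := map_mul f x c.unop

theorem RingHom.ringHomSurjective_op {R S : Type*} [Semiring R] [Semiring S] {f : R →+* S}
    (hf : Function.Surjective f) : RingHomSurjective (RingHom.op f) :=
  ⟨fun s => let ⟨a, ha⟩ := hf s.unop; ⟨MulOpposite.op a, by simp [ha]⟩⟩

theorem Submodule.isCoatom_map_of_surjective {R R₂ M M₂ : Type*} [Ring R] [Ring R₂]
    [AddCommGroup M] [AddCommGroup M₂] [Module R M] [Module R₂ M₂] {σ : R →+* R₂}
    [RingHomSurjective σ] {f : M →ₛₗ[σ] M₂} (hf : Function.Surjective f) {p : Submodule R M}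
    (hp : IsCoatom p) (hker : LinearMap.ker f ≤ p) : IsCoatom (p.map f) :=
  (giMapComap hf).isCoatom_of_image (by rwa [comap_map_eq_self hker])

theorem Submodule.eq_top_of_one_mem_op {R : Type*} [Ring R] {M : Submodule Rᵐᵒᵖ R}
    (h : (1 : R) ∈ M) : M = ⊤ :=
  eq_top_iff.2 fun y _ => by simpa using M.smul_mem (op y) h

theorem Submodule.mem_of_isCoatom_of_forall_isNilpotent_mul {R : Type*} [Ring R]
    {M : Submodule Rᵐᵒᵖ R} (hM : IsCoatom M) {k : R} (hk : ∀ c, IsNilpotent (k * c)) :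
    k ∈ M := by
  by_contra hkM
  have hsup : M ⊔ span Rᵐᵒᵖ {k} = ⊤ :=
    codisjoint_iff.1 (hM.not_le_iff_codisjoint.1 (by rwa [span_singleton_le_iff_mem]))
  obtain ⟨m, hm, _, hz, hmz⟩ := mem_sup.1 (hsup ▸ mem_top : (1 : R) ∈ M ⊔ span Rᵐᵒᵖ {k})
  obtain ⟨c, rfl⟩ := mem_span_singleton.1 hz
  obtain ⟨u, rfl⟩ : IsUnit m := by
    rw [eq_sub_of_add_eq hmz, smul_eq_mul_unop]
    exact (hk _).isUnit_one_sub
  exact hM.ne_top (eq_top_of_one_mem_op (by simpa using M.smul_mem (op ↑u⁻¹) hm))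

theorem stmt12 (R S : Type*) [Ring R] [Ring S]
    (f : R →+* S) (hf : Function.Surjective f)
    (hnil : ∀ x : R, f x = 0 → IsNilpotent x)
    (hS : RightQuasiDuo S) : RightQuasiDuo R := by
  intro M hM r x hx
  have := f.ringHomSurjective_op hf
  have hker : LinearMap.ker f.toOpSemilinearMap ≤ M := fun k hk =>
    M.mem_of_isCoatom_of_forall_isNilpotent_mul hM fun c => hnil _ <| by
      rw [map_mul, ← f.toOpSemilinearMap_apply, LinearMap.mem_ker.1 hk, zero_mul]
  have hrx : r * x ∈ (M.map f.toOpSemilinearMap).comap f.toOpSemilinearMap := by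
    simpa using hS _ (isCoatom_map_of_surjective hf hM hker) (f r) (f x) (mem_map_of_mem hx)
  rwa [comap_map_eq_self hker] at hrx
end

section
/- Let s be a central regular (non-zero-divisor) element of a ring R. If the localization R[s^{-1}] of R at the central multiplicative set {1, s, s^2, ...} is right quasi-duo and R/sR is right quasi-duo, then R is right quasi-duo. -/
lemma mul_mem_right' {R : Type*} [Ring R] {I : Submodule Rᵐᵒᵖ R} {x : R} (c : R)
    (h : x ∈ I) : x * c ∈ I := by
  have := I.smul_mem (MulOpposite.op c) h
  rwa [op_smul_eq_mul] at this

lemma eq_top_of_one_mem' {R : Type*} [Ring R] {I : Submodule Rᵐᵒᵖ R} (h : (1 : R) ∈ I) :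
    I = ⊤ := by
  rw [Submodule.eq_top_iff']
  intro z
  simpa using mul_mem_right' z h

theorem stmt13 (R Q S : Type*) [Ring R] [Ring Q] [Ring S]
    (s : R) (hcentral : ∀ r : R, s * r = r * s)
    (hregl : ∀ r : R, s * r = 0 → r = 0) (hregr : ∀ r : R, r * s = 0 → r = 0)
    (f : R →+* Q) (hinj : Function.Injective f) (hs : IsUnit (f s))
    (hloc : ∀ q : Q, ∃ (r : R) (n : ℕ), q * f s ^ n = f r)
    (hQ : RightQuasiDuo Q)
    (g : R →+* S) (hg : Function.Surjective g)
    (hker : ∀ x : R, g x = 0 ↔ ∃ r : R, x = s * r)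
    (hS : RightQuasiDuo S) : RightQuasiDuo R := by
  -- powers of s are central
  have hcpow : ∀ (n : ℕ) (r : R), s ^ n * r = r * s ^ n := by
    intro n
    induction n with
    | zero => simp
    | succ n ih =>
      intro r
      rw [pow_succ, mul_assoc, hcentral, ← mul_assoc, ih, mul_assoc]
  intro I hI r x hx
  by_cases hsI : s ∈ I
  · -- quotient case: use hS
    set K : Submodule Sᵐᵒᵖ S :=
      { carrier := g '' I
        add_mem' := by
          rintro a b ⟨y, hy, rfl⟩ ⟨z, hz, rfl⟩
          exact ⟨y + z, I.add_mem hy hz, map_add g y z⟩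
        zero_mem' := ⟨0, I.zero_mem, map_zero g⟩
        smul_mem' := by
          rintro a b ⟨y, hy, rfl⟩
          obtain ⟨c, hc⟩ := hg a.unop
          refine ⟨y * c, mul_mem_right' c hy, ?_⟩
          rw [MulOpposite.smul_eq_mul_unop, ← hc, map_mul] } with hK
    have hmemK : ∀ t : S, t ∈ K ↔ ∃ y ∈ I, g y = t := by
      intro t; rfl
    have hsR_sub : ∀ c : R, s * c ∈ I := fun c => mul_mem_right' c hsI
    have hKcoatom : IsCoatom K := by
      constructor
      · intro htop
        have h1 : (1 : S) ∈ K := htop ▸ Submodule.mem_top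
        obtain ⟨y, hy, hgy⟩ := (hmemK 1).mp h1
        have : g (y - 1) = 0 := by rw [map_sub, hgy, map_one, sub_self]
        obtain ⟨c, hc⟩ := (hker _).mp this
        have h1I : (1 : R) ∈ I := by
          have h1e : (1 : R) = y - s * c := by rw [← hc]; abel
          rw [h1e]
          exact I.sub_mem hy (hsR_sub c)
        exact hI.1 (eq_top_of_one_mem' h1I)
      · intro K' hKK'
        obtain ⟨t, htK', htK⟩ := Set.exists_of_ssubset hKK'
        obtain ⟨b, rfl⟩ := hg t
        have hbI : b ∉ I := fun hb => htK ((hmemK _).mpr ⟨b, hb, rfl⟩)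
        have hsup : I ⊔ Submodule.span Rᵐᵒᵖ {b} = ⊤ := by
          apply hI.2
          refine lt_of_le_of_ne le_sup_left ?_
          intro h
          exact hbI (h ▸ Submodule.mem_sup_right (Submodule.mem_span_singleton_self b))
        have h1 : (1 : R) ∈ I ⊔ Submodule.span Rᵐᵒᵖ {b} := hsup ▸ Submodule.mem_top
        obtain ⟨y, hy, z, hz, hyz⟩ := Submodule.mem_sup.mp h1
        obtain ⟨a, ha⟩ := Submodule.mem_span_singleton.mp hz
        rw [MulOpposite.smul_eq_mul_unop] at ha
        -- 1 = y + b * a.unop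
        have h1K' : (1 : S) ∈ K' := by
          have he : (1 : S) = g y + g b * g a.unop := by
            rw [← map_mul, ← map_add, ha, hyz, map_one]
          rw [he]
          refine K'.add_mem (hKK'.le ((hmemK _).mpr ⟨y, hy, rfl⟩)) ?_
          exact mul_mem_right' (g a.unop) htK'
        rw [Submodule.eq_top_iff']
        intro z'
        simpa using mul_mem_right' z' h1K'
    have hrx : g r * g x ∈ K := hS K hKcoatom (g r) (g x) ((hmemK _).mpr ⟨x, hx, rfl⟩)
    obtain ⟨y, hy, hgy⟩ := (hmemK _).mp hrx
    have : g (r * x - y) = 0 := by rw [map_sub, map_mul, hgy, sub_self]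
    obtain ⟨c, hc⟩ := (hker _).mp this
    have he : r * x = s * c + y := by rw [← hc]; abel
    rw [he]
    exact I.add_mem (hsR_sub c) hy
  · -- localization case: use hQ
    -- powers of s are not in I
    have hpow : ∀ n : ℕ, s ^ n ∉ I := by
      intro n
      induction n with
      | zero =>
        simpa using fun h => hI.1 (eq_top_of_one_mem' h)
      | succ n ih =>
        intro hmem
        apply ih
        have hsup : I ⊔ Submodule.span Rᵐᵒᵖ {s} = ⊤ := by
          apply hI.2
          refine lt_of_le_of_ne le_sup_left ?_
          intro h
          exact hsI (h ▸ Submodule.mem_sup_right (Submodule.mem_span_singleton_self s))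
        have h1 : (1 : R) ∈ I ⊔ Submodule.span Rᵐᵒᵖ {s} := hsup ▸ Submodule.mem_top
        obtain ⟨y, hy, z, hz, hyz⟩ := Submodule.mem_sup.mp h1
        obtain ⟨a, ha⟩ := Submodule.mem_span_singleton.mp hz
        rw [MulOpposite.smul_eq_mul_unop] at ha
        have he : s ^ n = y * s ^ n + s ^ (n + 1) * a.unop := by
          calc s ^ n = (y + s * a.unop) * s ^ n := by rw [ha, hyz, one_mul]
            _ = y * s ^ n + s * (a.unop * s ^ n) := by rw [add_mul, mul_assoc]
            _ = y * s ^ n + s * (s ^ n * a.unop) := by rw [hcpow]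
            _ = y * s ^ n + s ^ (n + 1) * a.unop := by rw [← mul_assoc, ← pow_succ']
        rw [he]
        exact I.add_mem (mul_mem_right' _ hy) (mul_mem_right' _ hmem)
    -- key cancelation: r' * s ^ n ∈ I → r' ∈ I
    have hclaim : ∀ (n : ℕ) (r' : R), r' * s ^ n ∈ I → r' ∈ I := by
      intro n r' hmem
      by_contra hr'
      apply hpow n
      have hsup : I ⊔ Submodule.span Rᵐᵒᵖ {r'} = ⊤ := by
        apply hI.2
        refine lt_of_le_of_ne le_sup_left ?_
        intro h
        exact hr' (h ▸ Submodule.mem_sup_right (Submodule.mem_span_singleton_self r'))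
      have h1 : (1 : R) ∈ I ⊔ Submodule.span Rᵐᵒᵖ {r'} := hsup ▸ Submodule.mem_top
      obtain ⟨y, hy, z, hz, hyz⟩ := Submodule.mem_sup.mp h1
      obtain ⟨a, ha⟩ := Submodule.mem_span_singleton.mp hz
      rw [MulOpposite.smul_eq_mul_unop] at ha
      have he : s ^ n = y * s ^ n + (r' * s ^ n) * a.unop := by
        calc s ^ n = (y + r' * a.unop) * s ^ n := by rw [ha, hyz, one_mul]
          _ = y * s ^ n + r' * (a.unop * s ^ n) := by rw [add_mul, mul_assoc]
          _ = y * s ^ n + r' * (s ^ n * a.unop) := by rw [hcpow]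
          _ = y * s ^ n + (r' * s ^ n) * a.unop := by rw [← mul_assoc]
      rw [he]
      exact I.add_mem (mul_mem_right' _ hy) (mul_mem_right' _ hmem)
    -- f s is central in Q
    have hcQ : ∀ q : Q, f s * q = q * f s := by
      intro q
      obtain ⟨r', n, h⟩ := hloc q
      apply (hs.pow n).mul_right_cancel
      calc f s * q * f s ^ n = f s * f r' := by rw [mul_assoc, h]
        _ = f r' * f s := by rw [← map_mul, ← map_mul, hcentral]
        _ = q * f s ^ n * f s := by rw [h]
        _ = q * f s * f s ^ n := by
            rw [mul_assoc, mul_assoc, ← pow_succ, ← pow_succ']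
    have hcQpow : ∀ (n : ℕ) (q : Q), f s ^ n * q = q * f s ^ n := by
      intro n q
      have h : Commute (f s) q := hcQ q
      exact (h.pow_left n).eq
    -- the extension of I to Q
    set J : Submodule Qᵐᵒᵖ Q :=
      { carrier := {q | ∃ n : ℕ, ∃ y ∈ I, q * f s ^ n = f y}
        add_mem' := by
          rintro q₁ q₂ ⟨n₁, y₁, hy₁, h₁⟩ ⟨n₂, y₂, hy₂, h₂⟩
          refine ⟨n₁ + n₂, y₁ * s ^ n₂ + y₂ * s ^ n₁,
            I.add_mem (mul_mem_right' _ hy₁) (mul_mem_right' _ hy₂), ?_⟩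
          have he : (q₁ + q₂) * f s ^ (n₁ + n₂) =
              (q₁ * f s ^ n₁) * f s ^ n₂ + (q₂ * f s ^ n₂) * f s ^ n₁ := by
            rw [add_mul, pow_add]
            congr 1
            · rw [mul_assoc]
            · rw [pow_mul_comm, mul_assoc]
          rw [he, h₁, h₂, map_add, map_mul, map_mul, map_pow, map_pow]
        zero_mem' := ⟨0, 0, I.zero_mem, by simp⟩
        smul_mem' := by
          rintro a q ⟨n, y, hy, h⟩
          obtain ⟨c, m, hc⟩ := hloc a.unop
          refine ⟨n + m, y * c, mul_mem_right' _ hy, ?_⟩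
          rw [MulOpposite.smul_eq_mul_unop, map_mul, ← h, ← hc, pow_add]
          rw [mul_assoc, mul_assoc]
          congr 1
          rw [← mul_assoc, ← mul_assoc, hcQpow n a.unop] } with hJ
    have hmemJ : ∀ q : Q, q ∈ J ↔ ∃ n : ℕ, ∃ y ∈ I, q * f s ^ n = f y := fun q => Iff.rfl
    have hJcoatom : IsCoatom J := by
      constructor
      · intro htop
        have h1 : (1 : Q) ∈ J := htop ▸ Submodule.mem_top
        obtain ⟨n, y, hy, h⟩ := (hmemJ 1).mp h1
        rw [one_mul, ← map_pow] at h
        exact hpow n ((hinj h) ▸ hy)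
      · intro K hJK
        obtain ⟨q, hqK, hqJ⟩ := Set.exists_of_ssubset hJK
        obtain ⟨r', n, h⟩ := hloc q
        have hr'I : r' ∉ I := fun hr' => hqJ ((hmemJ q).mpr ⟨n, r', hr', h⟩)
        have hsup : I ⊔ Submodule.span Rᵐᵒᵖ {r'} = ⊤ := by
          apply hI.2
          refine lt_of_le_of_ne le_sup_left ?_
          intro hh
          exact hr'I (hh ▸ Submodule.mem_sup_right (Submodule.mem_span_singleton_self r'))
        have h1 : (1 : R) ∈ I ⊔ Submodule.span Rᵐᵒᵖ {r'} := hsup ▸ Submodule.mem_top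
        obtain ⟨y, hy, z, hz, hyz⟩ := Submodule.mem_sup.mp h1
        obtain ⟨a, ha⟩ := Submodule.mem_span_singleton.mp hz
        rw [MulOpposite.smul_eq_mul_unop] at ha
        have h1K : (1 : Q) ∈ K := by
          have he : (1 : Q) = f y + q * (f s ^ n * f a.unop) := by
            rw [← mul_assoc, h, ← map_mul, ← map_add, ha, hyz, map_one]
          rw [he]
          refine K.add_mem (hJK.le ((hmemJ _).mpr ⟨0, y, hy, by simp⟩)) ?_
          exact mul_mem_right' _ hqK
        rw [Submodule.eq_top_iff']
        intro z'
        simpa using mul_mem_right' z' h1K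
    have hfx : f x ∈ J := (hmemJ _).mpr ⟨0, x, hx, by simp⟩
    have hmul := hQ J hJcoatom (f r) (f x) hfx
    obtain ⟨n, y, hy, h⟩ := (hmemJ _).mp hmul
    rw [← map_mul, ← map_pow, ← map_mul] at h
    exact hclaim n _ ((hinj h) ▸ hy)
end

section
/- Let U ⊆ V be two-sided ideals of a ring R. Then W = {f ∈ R[x] : f(0) ∈ U and all coefficients of f of positive degree lie in V} is a two-sided ideal of R[x], and R[x]/W is right quasi-duo if and only if both R/U and (R/V)[x] are right quasi-duo. -/
section Transfer

open MulOpposite Function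

variable {A B : Type*} [Ring A] [Ring B] (φ : A →+* B)

/-- Preimage of a right ideal under a ring hom. -/
def rcomap (I : Submodule Bᵐᵒᵖ B) : Submodule Aᵐᵒᵖ A where
  carrier := φ ⁻¹' I
  add_mem' := fun {a b} ha hb => by
    simp only [Set.mem_preimage, SetLike.mem_coe, map_add] at *
    exact I.add_mem ha hb
  zero_mem' := by simp only [Set.mem_preimage, map_zero, SetLike.mem_coe]; exact I.zero_mem
  smul_mem' := fun c a ha => by
    simp only [Set.mem_preimage, SetLike.mem_coe] at *
    show φ (a * c.unop) ∈ I
    rw [map_mul]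
    exact I.smul_mem (op (φ c.unop)) ha

lemma mem_rcomap {I : Submodule Bᵐᵒᵖ B} {a : A} : a ∈ rcomap φ I ↔ φ a ∈ I := Iff.rfl

/-- Image of a right ideal under a surjective ring hom. -/
def rmap (hφ : Surjective φ) (M : Submodule Aᵐᵒᵖ A) : Submodule Bᵐᵒᵖ B where
  carrier := φ '' M
  zero_mem' := ⟨0, M.zero_mem, map_zero φ⟩
  add_mem' := by
    rintro a b ⟨x, hx, rfl⟩ ⟨y, hy, rfl⟩
    exact ⟨x + y, M.add_mem hx hy, map_add φ x y⟩
  smul_mem' := by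
    rintro c b ⟨x, hx, rfl⟩
    obtain ⟨d, hd⟩ := hφ c.unop
    refine ⟨x * d, M.smul_mem (op d) hx, ?_⟩
    show φ (x * d) = φ x * c.unop
    rw [map_mul, hd]

lemma mem_rmap {hφ : Surjective φ} {M : Submodule Aᵐᵒᵖ A} {b : B} :
    b ∈ rmap φ hφ M ↔ ∃ a ∈ M, φ a = b := Iff.rfl

lemma r.one_mem_top_iff (I : Submodule Bᵐᵒᵖ B) : I = ⊤ ↔ (1 : B) ∈ I := by
  constructor
  · rintro rfl; trivial
  · intro h
    rw [eq_top_iff]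
    intro b _
    have := I.smul_mem (op b) h
    rwa [op_smul_eq_mul, one_mul] at this

lemma rcomap_rmap (hφ : Surjective φ) {M : Submodule Aᵐᵒᵖ A}
    (hker : ∀ a, φ a = 0 → a ∈ M) : rcomap φ (rmap φ hφ M) = M := by
  ext a
  rw [mem_rcomap, mem_rmap]
  constructor
  · rintro ⟨m, hm, hma⟩
    have h1 : φ (a - m) = 0 := by rw [map_sub, hma, sub_self]
    have := M.add_mem (hker _ h1) hm
    rwa [sub_add_cancel] at this
  · intro h; exact ⟨a, h, rfl⟩

lemma rmap_rcomap (hφ : Surjective φ) (I : Submodule Bᵐᵒᵖ B) :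
    rmap φ hφ (rcomap φ I) = I := by
  ext b
  rw [mem_rmap]
  constructor
  · rintro ⟨a, ha, rfl⟩; exact ha
  · intro hb
    obtain ⟨a, rfl⟩ := hφ b
    exact ⟨a, hb, rfl⟩

lemma le_rcomap_rmap (hφ : Surjective φ) (M : Submodule Aᵐᵒᵖ A) :
    M ≤ rcomap φ (rmap φ hφ M) := fun a ha => ⟨a, ha, rfl⟩

lemma rmap_mono (hφ : Surjective φ) {M N : Submodule Aᵐᵒᵖ A} (h : M ≤ N) :
    rmap φ hφ M ≤ rmap φ hφ N := by
  rintro b ⟨a, ha, rfl⟩; exact ⟨a, h ha, rfl⟩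

lemma isCoatom_rcomap (hφ : Surjective φ) {I : Submodule Bᵐᵒᵖ B} (hI : IsCoatom I) :
    IsCoatom (rcomap φ I) := by
  constructor
  · intro h
    apply hI.1
    rw [r.one_mem_top_iff]
    have : (1 : A) ∈ rcomap φ I := h ▸ trivial
    rwa [mem_rcomap, map_one] at this
  · intro K hK
    have h1 : I ≤ rmap φ hφ K := by
      rw [← rmap_rcomap φ hφ I]
      exact rmap_mono φ hφ hK.le
    have h2 : I ≠ rmap φ hφ K := by
      intro h
      have := le_rcomap_rmap φ hφ K
      rw [← h] at this
      exact absurd (le_antisymm this hK.le) hK.ne'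
    have h3 := hI.2 _ (lt_of_le_of_ne h1 h2)
    have h4 : (1 : B) ∈ rmap φ hφ K := h3 ▸ trivial
    obtain ⟨k, hk, hk1⟩ := h4
    have h5 : φ (1 - k) = 0 := by rw [map_sub, hk1, map_one, sub_self]
    have h6 : (1 : A) - k ∈ K := hK.le (show φ (1 - k) ∈ I by rw [h5]; exact I.zero_mem)
    have h7 : (1 : A) ∈ K := by
      have := K.add_mem h6 hk
      rwa [sub_add_cancel] at this
    rw [eq_top_iff]
    intro a _
    have := K.smul_mem (op a) h7
    rwa [op_smul_eq_mul, one_mul] at this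

lemma isCoatom_rmap (hφ : Surjective φ) {M : Submodule Aᵐᵒᵖ A}
    (hker : ∀ a, φ a = 0 → a ∈ M) (hM : IsCoatom M) : IsCoatom (rmap φ hφ M) := by
  constructor
  · intro h
    apply hM.1
    have h4 : (1 : B) ∈ rmap φ hφ M := h ▸ trivial
    obtain ⟨m, hm, hm1⟩ := h4
    have h5 : φ (1 - m) = 0 := by rw [map_sub, hm1, map_one, sub_self]
    have h7 : (1 : A) ∈ M := by
      have := M.add_mem (hker _ h5) hm
      rwa [sub_add_cancel] at this
    rw [eq_top_iff]
    intro a _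
    have := M.smul_mem (op a) h7
    rwa [op_smul_eq_mul, one_mul] at this
  · intro I' hI'
    have h1 : M ≤ rcomap φ I' := by
      rw [← rcomap_rmap φ hφ hker]
      exact fun a ha => hI'.le ha
    have h2 : M ≠ rcomap φ I' := by
      intro h
      have : rmap φ hφ M = I' := by rw [h, rmap_rcomap]
      exact absurd this hI'.ne
    have h3 := hM.2 _ (lt_of_le_of_ne h1 h2)
    have h4 : (1 : A) ∈ rcomap φ I' := h3 ▸ trivial
    rw [mem_rcomap, map_one] at h4
    rw [r.one_mem_top_iff]
    exact h4

lemma rqd_of_comap (hφ : Surjective φ)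
    (h : ∀ M : Submodule Aᵐᵒᵖ A, IsCoatom M → (∀ a, φ a = 0 → a ∈ M) →
      ∀ r x, x ∈ M → r * x ∈ M) : RightQuasiDuo B := by
  intro I hI r x hx
  obtain ⟨a, rfl⟩ := hφ x
  obtain ⟨s, rfl⟩ := hφ r
  have hker : ∀ a, φ a = 0 → a ∈ rcomap φ I := by
    intro a ha
    rw [mem_rcomap, ha]
    exact I.zero_mem
  have := h (rcomap φ I) (isCoatom_rcomap φ hφ hI) hker s a hx
  rw [← map_mul]
  exact this

lemma closed_of_rqd (hφ : Surjective φ) (hB : RightQuasiDuo B)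
    {M : Submodule Aᵐᵒᵖ A} (hM : IsCoatom M) (hker : ∀ a, φ a = 0 → a ∈ M) :
    ∀ r x, x ∈ M → r * x ∈ M := by
  intro r x hx
  have h2 := hB (rmap φ hφ M) (isCoatom_rmap φ hφ hker hM) (φ r) (φ x) ⟨x, hx, rfl⟩
  have h3 : r * x ∈ rcomap φ (rmap φ hφ M) := by
    rw [mem_rcomap, map_mul]
    exact h2
  rwa [rcomap_rmap φ hφ hker] at h3

end Transfer

open MulOpposite Polynomial Function in
private lemma mk'_eq_zero_iff {S' : Type*} [Ring S'] (I : TwoSidedIdeal S') (a : S') :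
    I.ringCon.mk' a = 0 ↔ a ∈ I := by
  rw [TwoSidedIdeal.mem_iff]
  change (a : I.ringCon.Quotient) = 0 ↔ _
  rw [← I.ringCon.coe_zero, RingCon.eq]

open MulOpposite Polynomial Function in
theorem stmt14 (R : Type*) [Ring R] (U V : TwoSidedIdeal R) (hUV : U ≤ V) :
    ∃ W : TwoSidedIdeal (Polynomial R),
      (∀ f : Polynomial R, f ∈ W ↔ f.coeff 0 ∈ U ∧ ∀ i : ℕ, 0 < i → f.coeff i ∈ V) ∧
      (RightQuasiDuo W.ringCon.Quotient ↔
        RightQuasiDuo U.ringCon.Quotient ∧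
          RightQuasiDuo (Polynomial V.ringCon.Quotient)) := by
  classical
  set S : Set (Polynomial R) :=
    {f | f.coeff 0 ∈ U ∧ ∀ i : ℕ, 0 < i → f.coeff i ∈ V} with hS
  have hzero : (0 : Polynomial R) ∈ S :=
    ⟨by simp [U.zero_mem], fun i _ => by simp [V.zero_mem]⟩
  have hadd : ∀ {x y : Polynomial R}, x ∈ S → y ∈ S → x + y ∈ S := by
    rintro x y ⟨hx0, hx⟩ ⟨hy0, hy⟩
    exact ⟨by rw [coeff_add]; exact U.add_mem hx0 hy0,
      fun i hi => by rw [coeff_add]; exact V.add_mem (hx i hi) (hy i hi)⟩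
  have hneg : ∀ {x : Polynomial R}, x ∈ S → -x ∈ S := by
    rintro x ⟨hx0, hx⟩
    exact ⟨by rw [coeff_neg]; exact U.neg_mem hx0,
      fun i hi => by rw [coeff_neg]; exact V.neg_mem (hx i hi)⟩
  have hmull : ∀ {g f : Polynomial R}, f ∈ S → g * f ∈ S := by
    rintro g f ⟨hf0, hf⟩
    constructor
    · rw [mul_coeff_zero]; exact U.mul_mem_left _ _ hf0
    · intro i _
      rw [coeff_mul]
      apply sum_mem
      rintro ⟨a, b⟩ hab
      by_cases hb : b = 0
      · subst hb; exact V.mul_mem_left _ _ (hUV hf0)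
      · exact V.mul_mem_left _ _ (hf b (Nat.pos_of_ne_zero hb))
  have hmulr : ∀ {f g : Polynomial R}, f ∈ S → f * g ∈ S := by
    rintro f g ⟨hf0, hf⟩
    constructor
    · rw [mul_coeff_zero]; exact U.mul_mem_right _ _ hf0
    · intro i _
      rw [coeff_mul]
      apply sum_mem
      rintro ⟨a, b⟩ hab
      by_cases ha : a = 0
      · subst ha; exact V.mul_mem_right _ _ (hUV hf0)
      · exact V.mul_mem_right _ _ (hf a (Nat.pos_of_ne_zero ha))
  refine ⟨TwoSidedIdeal.mk' S hzero hadd hneg hmull hmulr, ?_, ?_⟩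
  · intro f
    exact TwoSidedIdeal.mem_mk' S hzero hadd hneg hmull hmulr f
  set W : TwoSidedIdeal (Polynomial R) :=
    TwoSidedIdeal.mk' S hzero hadd hneg hmull hmulr with hWdef
  have hmemW : ∀ f : Polynomial R, f ∈ W ↔ f ∈ S :=
    fun f => TwoSidedIdeal.mem_mk' S hzero hadd hneg hmull hmulr f
  set πW : Polynomial R →+* W.ringCon.Quotient := W.ringCon.mk' with hπW
  set πU : Polynomial R →+* U.ringCon.Quotient :=
    U.ringCon.mk'.comp (constantCoeff : Polynomial R →+* R) with hπU
  set πV : Polynomial R →+* Polynomial V.ringCon.Quotient :=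
    mapRingHom (V.ringCon.mk') with hπV
  have hsW : Surjective πW := fun q => Quot.inductionOn q (fun a => ⟨a, rfl⟩)
  have hsmk : ∀ {S' : Type _} [inst : Ring S'] (I : TwoSidedIdeal S'),
      Surjective I.ringCon.mk' := fun I q => Quot.inductionOn q (fun a => ⟨a, rfl⟩)
  have hsU : Surjective πU :=
    (hsmk U).comp (fun r => ⟨C r, by simp⟩)
  have hsV : Surjective πV := map_surjective _ (hsmk V)
  have hkerW : ∀ f, πW f = 0 ↔ f ∈ W := fun f => mk'_eq_zero_iff W f
  have hkerU : ∀ f, πU f = 0 ↔ f.coeff 0 ∈ U := fun f => mk'_eq_zero_iff U _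
  have hkerV : ∀ f, πV f = 0 ↔ ∀ i, f.coeff i ∈ V := by
    intro f
    have h1 : πV f = 0 ↔ ∀ n, V.ringCon.mk' (f.coeff n) = 0 := by
      rw [hπV, coe_mapRingHom, Polynomial.ext_iff]
      apply forall_congr'
      intro n
      rw [coeff_map, coeff_zero]
    rw [h1]
    exact forall_congr' (fun n => mk'_eq_zero_iff V _)
  constructor
  · intro hQ
    constructor
    · apply rqd_of_comap πU hsU
      intro M hM hker
      apply closed_of_rqd πW hsW hQ hM
      intro f hf
      apply hker
      rw [hkerU]
      exact ((hmemW f).mp ((hkerW f).mp hf)).1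
    · apply rqd_of_comap πV hsV
      intro M hM hker
      apply closed_of_rqd πW hsW hQ hM
      intro f hf
      apply hker
      rw [hkerV]
      have hfW := (hmemW f).mp ((hkerW f).mp hf)
      intro i
      cases i with
      | zero => exact hUV hfW.1
      | succ n => exact hfW.2 _ (Nat.succ_pos n)
  · rintro ⟨hU, hV⟩
    apply rqd_of_comap πW hsW
    intro M hM hker
    have hWM : ∀ f ∈ W, f ∈ M := fun f hf => hker f ((hkerW f).mpr hf)
    by_cases hX : (X : Polynomial R) ∈ M
    · apply closed_of_rqd πU hsU hU hM
      intro f hf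
      rw [hkerU] at hf
      have h1 : (X : Polynomial R) * f.divX ∈ M := by
        have := M.smul_mem (op f.divX) hX
        rwa [op_smul_eq_mul] at this
      have h2 : (C (f.coeff 0) : Polynomial R) ∈ M := by
        apply hWM
        rw [hmemW]
        refine ⟨by simpa using hf, fun i hi => ?_⟩
        rw [coeff_C, if_neg (Nat.pos_iff_ne_zero.mp hi)]
        exact V.zero_mem
      have h3 := M.add_mem h1 h2
      rwa [X_mul_divX_add] at h3
    · apply closed_of_rqd πV hsV hV hM
      intro f hf
      rw [hkerV] at hf
      have hsup : M ⊔ Submodule.span (Polynomial R)ᵐᵒᵖ {(X : Polynomial R)} = ⊤ := by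
        apply hM.2
        apply lt_of_le_of_ne le_sup_left
        intro h
        apply hX
        have hXin : (X : Polynomial R) ∈
            M ⊔ Submodule.span (Polynomial R)ᵐᵒᵖ {(X : Polynomial R)} :=
          Submodule.mem_sup_right (Submodule.mem_span_singleton_self _)
        rwa [← h] at hXin
      have h1 : (1 : Polynomial R) ∈
          M ⊔ Submodule.span (Polynomial R)ᵐᵒᵖ {(X : Polynomial R)} := hsup ▸ trivial
      rw [Submodule.mem_sup] at h1
      obtain ⟨m, hm, y, hy, hmy⟩ := h1
      rw [Submodule.mem_span_singleton] at hy
      obtain ⟨g, rfl⟩ := hy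
      have hone : m + (X : Polynomial R) * g.unop = 1 := by
        rw [← hmy]
        conv_rhs => rw [← op_unop g, op_smul_eq_mul]
      have hCv : ∀ v, v ∈ V → (C v : Polynomial R) ∈ M := by
        intro v hv
        have e1 : (C v : Polynomial R) = m * C v + X * (g.unop * C v) := by
          conv_lhs => rw [← one_mul (C v : Polynomial R), ← hone]
          rw [add_mul, mul_assoc]
        rw [e1]
        apply M.add_mem
        · have := M.smul_mem (op (C v : Polynomial R)) hm
          rwa [op_smul_eq_mul] at this
        · apply hWM
          rw [hmemW]
          constructor
          · rw [mul_coeff_zero, coeff_X_zero, zero_mul]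
            exact U.zero_mem
          · intro i hi
            obtain ⟨k, rfl⟩ := Nat.exists_eq_succ_of_ne_zero (Nat.pos_iff_ne_zero.mp hi)
            rw [coeff_X_mul, coeff_mul_C]
            exact V.mul_mem_left _ _ hv
      rw [← sum_C_mul_X_pow_eq f, Polynomial.sum_def]
      apply Submodule.sum_mem
      intro n _
      have := M.smul_mem (op ((X : Polynomial R) ^ n)) (hCv _ (hf n))
      rwa [op_smul_eq_mul] at this
end

section
/- Suppose the polynomial ring R[x] is right quasi-duo. Then for all a, b ∈ R, the commutator ab − ba is a nilpotent element of R. -/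
open Polynomial MulOpposite

section RightIdeal

variable {A : Type*} [Ring A]

instance Module.Finite.op_self : Module.Finite Aᵐᵒᵖ A :=
  ⟨⟨{1}, by
    rw [Finset.coe_singleton, Submodule.span_singleton_eq_top_iff]
    exact fun v => ⟨op v, by simp⟩⟩⟩

theorem Submodule.mul_right_mem_op (I : Submodule Aᵐᵒᵖ A) {z : A} (hz : z ∈ I) (g : A) :
    z * g ∈ I := by
  simpa using I.smul_mem (op g) hz

theorem Submodule.eq_top_of_one_mem_op_s15 {I : Submodule Aᵐᵒᵖ A} (h1 : (1 : A) ∈ I) : I = ⊤ :=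
  Submodule.eq_top_iff'.mpr fun x => by simpa using I.mul_right_mem_op h1 x

theorem exists_isCoatom_mem_of_forall_mul_ne_one {u : A} (hu : ∀ g, u * g ≠ 1) :
    ∃ M : Submodule Aᵐᵒᵖ A, IsCoatom M ∧ u ∈ M := by
  have hspan : Aᵐᵒᵖ ∙ u ≠ ⊤ := by
    rw [Ne, Submodule.span_singleton_eq_top_iff]
    intro h
    obtain ⟨g, hg⟩ := h 1
    exact hu (unop g) (by simpa using hg)
  obtain ⟨M, hM, hle⟩ := (eq_top_or_exists_le_coatom _).resolve_left hspan
  exact ⟨M, hM, hle (Submodule.mem_span_singleton_self u)⟩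

end RightIdeal

section Nilpotent

variable {R : Type*} [Ring R]

theorem isNilpotent_of_one_sub_C_mul_X_mul_eq_one {c : R} {g : R[X]}
    (hg : (1 - C c * X) * g = 1) : IsNilpotent c := by
  have hcoeff : ∀ n, g.coeff n = c ^ n := by
    intro n
    induction n with
    | zero => simpa [sub_mul, mul_assoc] using congrArg (coeff · 0) hg
    | succ n ih =>
      have h := congrArg (coeff · (n + 1)) hg
      simp only [sub_mul, one_mul, mul_assoc, coeff_sub, coeff_C_mul, coeff_X_mul, coeff_one] at h
      rw [pow_succ', ← ih, ← sub_eq_zero, h, if_neg n.succ_ne_zero]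
  refine ⟨g.natDegree + 1, ?_⟩
  rw [← hcoeff]
  exact coeff_eq_zero_of_natDegree_lt g.natDegree.lt_succ_self

end Nilpotent

namespace Polynomial

variable {R : Type*} [Ring R]

/-- Unlike `Polynomial.taylor`, the coefficients stay on the right, which makes the shift
compatible with right ideals. -/
noncomputable def rightTaylor (a : R) : R[X] →+ R[X] where
  toFun f := f.sum fun i r => (X + C a) ^ i * C r
  map_zero' := sum_zero_index _
  map_add' f g := sum_add_index f g _ (by simp) fun i r s => by rw [C_add, mul_add]

variable (a : R)

theorem rightTaylor_apply (f : R[X]) :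
    rightTaylor a f = f.sum fun i r => (X + C a) ^ i * C r :=
  rfl

theorem rightTaylor_monomial (n : ℕ) (r : R) :
    rightTaylor a (monomial n r) = (X + C a) ^ n * C r := by
  rw [rightTaylor_apply]
  exact sum_monomial_index r _ (by simp)

theorem rightTaylor_C (r : R) : rightTaylor a (C r) = C r := by
  simpa using rightTaylor_monomial a 0 r

theorem rightTaylor_one : rightTaylor a 1 = 1 := by
  simpa using rightTaylor_C a 1

theorem rightTaylor_mul_C (f : R[X]) (s : R) :
    rightTaylor a (f * C s) = rightTaylor a f * C s := by
  induction f using Polynomial.induction_on' with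
  | add p q hp hq => rw [add_mul, map_add, hp, hq, map_add, add_mul]
  | monomial n r =>
    rw [monomial_mul_C, rightTaylor_monomial, rightTaylor_monomial, C_mul, mul_assoc]

theorem rightTaylor_mul_X (f : R[X]) : rightTaylor a (f * X) = (X + C a) * rightTaylor a f := by
  induction f using Polynomial.induction_on' with
  | add p q hp hq => rw [add_mul, map_add, hp, hq, map_add, mul_add]
  | monomial n r =>
    rw [monomial_mul_X, rightTaylor_monomial, rightTaylor_monomial, pow_succ', mul_assoc]

theorem rightTaylor_mul_X_pow (f : R[X]) (n : ℕ) :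
    rightTaylor a (f * X ^ n) = (X + C a) ^ n * rightTaylor a f := by
  induction n with
  | zero => simp
  | succ n ih => rw [pow_succ, ← mul_assoc, rightTaylor_mul_X, ih, pow_succ', mul_assoc]

theorem rightTaylor_C_add_C_mul_X (r s : R) :
    rightTaylor a (C r + C s * X) = C (r + a * s) + C s * X := by
  have hX : rightTaylor a (C s * X) = (X + C a) * C s := by
    rw [C_mul_X_eq_monomial, rightTaylor_monomial, pow_one]
  rw [map_add, rightTaylor_C, hX, add_mul, X_mul_C, C_add, C_mul]
  abel

theorem rightTaylor_neg_rightTaylor (f : R[X]) : rightTaylor (-a) (rightTaylor a f) = f := by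
  have hpow (n : ℕ) : rightTaylor (-a) ((X + C a) ^ n) = X ^ n := by
    induction n with
    | zero => simpa using rightTaylor_one (-a)
    | succ n ih =>
      rw [pow_succ, mul_add, map_add, rightTaylor_mul_X, rightTaylor_mul_C, ih, C_neg,
        (commute_X_pow (C a) n).eq, pow_succ']
      noncomm_ring
  induction f using Polynomial.induction_on' with
  | add p q hp hq => rw [map_add, map_add, hp, hq]
  | monomial n r =>
    rw [rightTaylor_monomial, rightTaylor_mul_C, hpow, X_pow_mul_C, C_mul_X_pow_eq_monomial]

theorem rightTaylor_rightTaylor_neg (f : R[X]) : rightTaylor a (rightTaylor (-a) f) = f := by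
  simpa using rightTaylor_neg_rightTaylor (-a) f

theorem rightTaylor_mul_mem {M : Submodule R[X]ᵐᵒᵖ R[X]} (hM : ∀ r x : R[X], x ∈ M → r * x ∈ M)
    {f : R[X]} (hf : rightTaylor a f ∈ M) (g : R[X]) : rightTaylor a (f * g) ∈ M := by
  induction g using Polynomial.induction_on' with
  | add p q hp hq => rw [mul_add, map_add]; exact M.add_mem hp hq
  | monomial n s =>
    rw [← C_mul_X_pow_eq_monomial, ← X_pow_mul, ← mul_assoc, rightTaylor_mul_C,
      rightTaylor_mul_X_pow]
    exact M.mul_right_mem_op (hM _ _ hf) (C s)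

def rightTaylorComap (M : Submodule R[X]ᵐᵒᵖ R[X]) (hM : ∀ r x : R[X], x ∈ M → r * x ∈ M) :
    Submodule R[X]ᵐᵒᵖ R[X] where
  carrier := rightTaylor a ⁻¹' M
  add_mem' hf hg := by simpa using M.add_mem hf hg
  zero_mem' := by simp
  smul_mem' g f hf := by simpa using rightTaylor_mul_mem a hM hf (unop g)

variable {a} {M : Submodule R[X]ᵐᵒᵖ R[X]} {hM : ∀ r x : R[X], x ∈ M → r * x ∈ M}

theorem mem_rightTaylorComap {f : R[X]} : f ∈ rightTaylorComap a M hM ↔ rightTaylor a f ∈ M :=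
  Iff.rfl

theorem rightTaylorComap_ne_top (hM_ne : M ≠ ⊤) : rightTaylorComap a M hM ≠ ⊤ := by
  intro h
  have h1 : (1 : R[X]) ∈ rightTaylorComap a M hM := h ▸ Submodule.mem_top
  rw [mem_rightTaylorComap, rightTaylor_one] at h1
  exact hM_ne (Submodule.eq_top_of_one_mem_op_s15 h1)

theorem isCoatom_rightTaylorComap (h : RightQuasiDuo R[X]) (hMc : IsCoatom M) :
    IsCoatom (rightTaylorComap a M (h M hMc)) := by
  refine ⟨rightTaylorComap_ne_top hMc.1, fun N hlt => ?_⟩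
  by_contra hN
  obtain ⟨P, hP, hNP⟩ := (eq_top_or_exists_le_coatom N).resolve_left hN
  have hMP : M ≤ rightTaylorComap (-a) P (h P hP) := fun m hm =>
    hNP <| hlt.le <| by rwa [mem_rightTaylorComap, rightTaylor_rightTaylor_neg]
  have hPM : rightTaylorComap (-a) P (h P hP) = M :=
    (hMc.le_iff.mp hMP).resolve_left (rightTaylorComap_ne_top hP.1)
  have hPN : P ≤ rightTaylorComap a M (h M hMc) := fun f hf => by
    rw [mem_rightTaylorComap, ← hPM, mem_rightTaylorComap, rightTaylor_neg_rightTaylor]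
    exact hf
  exact hlt.not_ge (hNP.trans hPN)

end Polynomial

theorem stmt15 (R : Type*) [Ring R] (h : RightQuasiDuo (Polynomial R)) :
    ∀ a b : R, IsNilpotent (a * b - b * a) := by
  intro a b
  set c := a * b - b * a
  by_contra hc
  obtain ⟨M, hM, huM⟩ := exists_isCoatom_mem_of_forall_mul_ne_one fun g hg =>
    hc (isNilpotent_of_one_sub_C_mul_X_mul_eq_one hg)
  have hN := h _ (isCoatom_rightTaylorComap (a := a) h hM)
  have hF : C (1 + a * c) + C (-c) * X ∈ rightTaylorComap a M (h M hM) := by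
    rw [mem_rightTaylorComap, rightTaylor_C_add_C_mul_X]
    simpa [sub_eq_add_neg] using huM
  have hbF := hN (C b) _ hF
  rw [mem_rightTaylorComap, mul_add, ← mul_assoc, ← C_mul, ← C_mul,
    rightTaylor_C_add_C_mul_X] at hbF
  have hcc : C (c ^ 2) ∈ M := by
    have := M.sub_mem (h M hM (C b) _ huM) hbF
    convert this using 1
    simp only [c, map_sub, map_add, map_mul, map_neg, map_one, map_pow]
    noncomm_ring
  have h1 : (1 - C c * X) * (1 + C c * X) + C (c ^ 2) * X ^ 2 = 1 := by
    rw [C_pow, ← (commute_X (C c)).symm.mul_pow]; noncomm_ring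
  have h1M : (1 : R[X]) ∈ M :=
    h1 ▸ M.add_mem (M.mul_right_mem_op huM _) (M.mul_right_mem_op hcc _)
  exact hM.1 (Submodule.eq_top_of_one_mem_op_s15 h1M)
end

section
/- Suppose the polynomial ring R[x] is right quasi-duo and M is a maximal two-sided ideal of R[x] with x ∈ M. Then M = M_0 + R[x]·x, where M_0 = M ∩ R is a maximal two-sided ideal of R. -/
theorem stmt16 (R : Type*) [Ring R] (h : RightQuasiDuo (Polynomial R))
    (M : TwoSidedIdeal (Polynomial R)) (hM : IsCoatom M)
    (hx : Polynomial.X ∈ M) :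
    ∃ M₀ : TwoSidedIdeal R, IsCoatom M₀ ∧
      (∀ r : R, r ∈ M₀ ↔ Polynomial.C r ∈ M) ∧
      ∀ f : Polynomial R, f ∈ M ↔ Polynomial.C (f.coeff 0) ∈ M := by
  -- key fact: f ∈ M ↔ C (f.coeff 0) ∈ M, since f - C (f.coeff 0) = divX f * X ∈ M
  have hkey : ∀ f : Polynomial R, f ∈ M ↔ Polynomial.C (f.coeff 0) ∈ M := by
    intro f
    have hmem : f.divX * Polynomial.X ∈ M := M.mul_mem_left _ _ hx
    have hsub : f - Polynomial.C (f.coeff 0) = f.divX * Polynomial.X :=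
      sub_eq_iff_eq_add.mpr (Polynomial.divX_mul_X_add f).symm
    constructor
    · intro hf
      have := M.sub_mem hf (hsub ▸ hmem)
      simpa using this
    · intro hc
      have := M.add_mem (hsub ▸ hmem) hc
      simpa using this
  refine ⟨TwoSidedIdeal.comap (Polynomial.C : R →+* Polynomial R) M, ?_, fun r => TwoSidedIdeal.mem_comap _, hkey⟩
  constructor
  · intro htop
    have : (1 : R) ∈ TwoSidedIdeal.comap (Polynomial.C : R →+* Polynomial R) M := htop ▸ trivial
    rw [TwoSidedIdeal.mem_comap _] at this
    simp only [map_one] at this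
    exact hM.1 (M.eq_top this)
  · intro J hJ
    -- consider N = comap constantCoeff J
    set N := TwoSidedIdeal.comap (Polynomial.constantCoeff : Polynomial R →+* R) J with hN
    have hMN : M ≤ N := by
      intro f hf
      rw [TwoSidedIdeal.mem_comap _]
      exact hJ.le ((TwoSidedIdeal.mem_comap _).mpr ((hkey f).mp hf))
    have hne : M ≠ N := by
      obtain ⟨r, hrJ, hrM⟩ := SetLike.exists_of_lt hJ
      intro heq
      apply hrM
      rw [TwoSidedIdeal.mem_comap _]
      rw [heq, TwoSidedIdeal.mem_comap _]
      simpa using hrJ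
    have : N = ⊤ := hM.2 N (lt_of_le_of_ne hMN hne)
    have h1 : (1 : Polynomial R) ∈ N := this ▸ trivial
    rw [TwoSidedIdeal.mem_comap _] at h1
    simp only [map_one] at h1
    exact J.eq_top h1
end
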